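/- Fix b ≥ 1, let 𝒰 be a non-principal ultrafilter on the set ℙ of primes, let R = ∏_{p∈ℙ} ℤ/p^bℤ / 𝒰, and let π ∈ R be the class of the sequence (p mod p^b)_{p∈ℙ}. Then for every 0 ≤ i ≤ b, the annihilator {x ∈ R : π^i x = 0} of π^i in R equals the principal ideal π^{b−i}R. -/

import Mathlib

open FirstOrder Filter

/-- The congruence on the product ring identifying two sequences when they agree
on a set in the ultrafilter `𝒰`. -/
def ultraRingCon {I : Type*} (𝒰 : Ultrafilter I) (R : I → Type*) [∀ i, CommRing (R i)] :
    RingCon (∀ i, R i) where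
  r f g := ∀ᶠ i in (𝒰 : Filter I), f i = g i
  iseqv :=
    ⟨fun _ => Eventually.of_forall fun _ => rfl,
     fun h => h.mono fun _ e => e.symm,
     fun h₁ h₂ => h₂.mp (h₁.mono fun _ e₁ e₂ => e₁.trans e₂)⟩
  mul' := fun h₁ h₂ => h₂.mp (h₁.mono fun i e₁ e₂ => by
    simp only [Pi.mul_apply, e₁, e₂])
  add' := fun h₁ h₂ => h₂.mp (h₁.mono fun i e₁ e₂ => by
    simp only [Pi.add_apply, e₁, e₂])

/-- The ultraproduct `∏_{i ∈ I} R i / 𝒰` of the family of rings `R`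
with respect to the ultrafilter `𝒰`. -/
def UltraProd {I : Type*} (𝒰 : Ultrafilter I) (R : I → Type*) [∀ i, CommRing (R i)] : Type _ :=
  (ultraRingCon 𝒰 R).Quotient

instance {I : Type*} (𝒰 : Ultrafilter I) (R : I → Type*) [∀ i, CommRing (R i)] :
    CommRing (UltraProd 𝒰 R) :=
  inferInstanceAs (CommRing (ultraRingCon 𝒰 R).Quotient)

/-- The class of a sequence in the ultraproduct. -/
def UltraProd.mk {I : Type*} (𝒰 : Ultrafilter I) (R : I → Type*) [∀ i, CommRing (R i)]
    (f : ∀ i, R i) : UltraProd 𝒰 R :=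
  (ultraRingCon 𝒰 R).mk' f

/-! In each factor `ℤ/p^bℤ` the annihilator of `p^i` is `p^(b-i)·ℤ/p^bℤ`, because
`p^i · p^(b-i) = p^b`. A statement of the shape `∀ x, a x = 0 ↔ ∃ y, x = c y` holding in almost
every factor passes to the ultraproduct (a case of Łoś's theorem): the witness `y` is chosen
coordinatewise. -/

theorem ZMod.natCast_mul_eq_zero_iff {n m k : ℕ} (hn : n ≠ 0) (hmk : m * k = n) (x : ZMod n) :
    (m : ZMod n) * x = 0 ↔ ∃ y, x = k * y := by
  have : NeZero n := ⟨hn⟩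
  constructor
  · intro h
    have hdvd : m * k ∣ m * x.val := by
      rw [hmk, ← ZMod.natCast_eq_zero_iff]
      push_cast
      rwa [ZMod.natCast_zmod_val]
    have hm : 0 < m := Nat.pos_of_ne_zero (left_ne_zero_of_mul (hmk ▸ hn))
    obtain ⟨c, hc⟩ := Nat.dvd_of_mul_dvd_mul_left hm hdvd
    exact ⟨c, by rw [← ZMod.natCast_zmod_val x, hc, Nat.cast_mul]⟩
  · rintro ⟨y, rfl⟩
    rw [← mul_assoc, ← Nat.cast_mul, hmk, ZMod.natCast_self, zero_mul]

namespace UltraProd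

variable {I : Type*} {𝒰 : Ultrafilter I} {R : I → Type*} [∀ i, CommRing (R i)]

theorem mk_surjective : Function.Surjective (UltraProd.mk 𝒰 R) :=
  (ultraRingCon 𝒰 R).mk'_surjective

theorem mk_eq_mk_iff {f g : ∀ i, R i} :
    UltraProd.mk 𝒰 R f = UltraProd.mk 𝒰 R g ↔ ∀ᶠ i in (𝒰 : Filter I), f i = g i :=
  Con.eq _

theorem mk_zero : UltraProd.mk 𝒰 R 0 = 0 := rfl

theorem mk_mul (f g : ∀ i, R i) :
    UltraProd.mk 𝒰 R (f * g) = UltraProd.mk 𝒰 R f * UltraProd.mk 𝒰 R g :=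
  map_mul (ultraRingCon 𝒰 R).mk' f g

theorem mk_pow (f : ∀ i, R i) (j : ℕ) :
    UltraProd.mk 𝒰 R (f ^ j) = UltraProd.mk 𝒰 R f ^ j :=
  map_pow (ultraRingCon 𝒰 R).mk' f j

theorem mul_eq_zero_iff_exists_eq_mul_of_eventually {a c : ∀ i, R i}
    (h : ∀ᶠ i in (𝒰 : Filter I), ∀ x : R i, a i * x = 0 ↔ ∃ y, x = c i * y)
    (x : UltraProd 𝒰 R) :
    UltraProd.mk 𝒰 R a * x = 0 ↔ ∃ y, x = UltraProd.mk 𝒰 R c * y := by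
  obtain ⟨f, rfl⟩ := mk_surjective x
  simp only [← mk_mul, ← mk_zero, mk_eq_mk_iff, Pi.mul_apply, Pi.zero_apply]
  constructor
  · intro hf
    classical
    refine ⟨UltraProd.mk 𝒰 R fun i => if hy : ∃ y, f i = c i * y then hy.choose else 0, ?_⟩
    rw [← mk_mul, mk_eq_mk_iff]
    filter_upwards [h, hf] with i hi hfi
    have hy := (hi (f i)).mp hfi
    simpa only [Pi.mul_apply, dif_pos hy] using hy.choose_spec
  · rintro ⟨y, hy⟩
    obtain ⟨g, rfl⟩ := mk_surjective y
    rw [← mk_mul, mk_eq_mk_iff] at hy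
    filter_upwards [h, hy] with i hi hyi
    exact (hi (f i)).mpr ⟨g i, hyi⟩

end UltraProd

theorem ultraproduct_annihilator_pow_pi_general (b : ℕ)
    (𝒰 : Ultrafilter {p : ℕ // p.Prime})
    (π : UltraProd 𝒰 fun p : {p : ℕ // p.Prime} => ZMod (p.1 ^ b))
    (hπ : π = UltraProd.mk 𝒰 _ fun p : {p : ℕ // p.Prime} => (p.1 : ZMod (p.1 ^ b)))
    (i : ℕ) (hi : i ≤ b) :
    ∀ x : UltraProd 𝒰 fun p : {p : ℕ // p.Prime} => ZMod (p.1 ^ b),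
      π ^ i * x = 0 ↔ ∃ y, x = π ^ (b - i) * y := by
  subst hπ
  simp only [← UltraProd.mk_pow]
  refine UltraProd.mul_eq_zero_iff_exists_eq_mul_of_eventually (Eventually.of_forall fun p => ?_)
  simpa only [Pi.pow_apply, Nat.cast_pow] using
    ZMod.natCast_mul_eq_zero_iff (pow_ne_zero b p.2.ne_zero) (pow_mul_pow_sub p.1 hi)

/-- Fix `b ≥ 1`, let `𝒰` be a non-principal ultrafilter on the set `ℙ` of primes, let
`R = ∏_{p ∈ ℙ} ℤ/p^bℤ / 𝒰`, and let `π ∈ R` be the class of the sequence `(p mod p^b)_p`.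
Then for every `0 ≤ i ≤ b`, the annihilator of `π^i` in `R` equals the principal ideal
`π^(b-i) R`. -/
theorem ultraproduct_annihilator_pow_pi (b : ℕ) (hb : 1 ≤ b)
    (𝒰 : Ultrafilter {p : ℕ // p.Prime})
    (hfree : ∀ p : {p : ℕ // p.Prime}, 𝒰 ≠ pure p)
    (π : UltraProd 𝒰 fun p : {p : ℕ // p.Prime} => ZMod (p.1 ^ b))
    (hπ : π = UltraProd.mk 𝒰 _ fun p : {p : ℕ // p.Prime} => (p.1 : ZMod (p.1 ^ b)))
    (i : ℕ) (hi : i ≤ b) :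
    ∀ x : UltraProd 𝒰 fun p : {p : ℕ // p.Prime} => ZMod (p.1 ^ b),
      π ^ i * x = 0 ↔ ∃ y, x = π ^ (b - i) * y :=
  ultraproduct_annihilator_pow_pi_general b 𝒰 π hπ i hi
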